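/- Let Ω ⊂ ℝ² be open and b : Ω → ℝ² locally Lipschitz continuous. Let v : Ω → ℝ be upper semicontinuous and a viscosity subsolution of −b·Dv = 0 in Ω (i.e., for every C¹ function φ on Ω and every z ∈ Ω at which v − φ attains a local maximum, −b(z)·Dφ(z) ≤ 0). Let X : ℝ → Ω be a C¹ periodic solution of X′(t) = b(X(t)). Then v is constant along the orbit: v(X(s)) = v(X(t)) for all s, t ∈ ℝ. Likewise, a lower semicontinuous viscosity supersolution w of −b·Dw = 0 in Ω (for every C¹ φ and local minimum point z of w − φ, −b(z)·Dφ(z) ≥ 0) is constant along every such periodic orbit. -/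

import Mathlib

/-!
Doubling of variables: for `s ≤ t` maximize `v x + η u - κ e^{2L(t-u)} ‖x - X u‖²` over a compact
neighbourhood of the arc `X '' [s, t]` times `[s, t]`, where `L` is a Lipschitz constant of `b`
there. For large `κ` the maximizer `(x, τ)` has `x` close to `X τ`, and if `τ < t` the viscosity
inequality at `x` contradicts the one-sided time derivative at `τ`. So `τ = t`, and comparing with
the value at `(X s, s)` gives `v (X s) ≤ v (X t) + o(1)` by upper semicontinuity. Hence `v ∘ X` is
nondecreasing, so constant along a periodic orbit; `w` is handled through `-w`.
-/

open Filter Topology Set Metric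

noncomputable section

/-- The plane `ℝ²` as a Euclidean space. -/
abbrev E2 : Type := EuclideanSpace ℝ (Fin 2)

open Real

theorem Function.Periodic.eq_of_monotone {α β : Type*} [AddCommGroup α] [LinearOrder α]
    [IsOrderedAddMonoid α] [Archimedean α] [PartialOrder β] {f : α → β} {T : α}
    (hf : Function.Periodic f T) (hT : 0 < T) (hmono : Monotone f) (s t : α) : f s = f t := by
  have key (s t : α) : f s ≤ f t := by
    obtain ⟨n, hn⟩ := Archimedean.arch (s - t) hT
    calc f s ≤ f (t + n • T) := hmono (sub_le_iff_le_add'.mp hn)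
      _ = f t := hf.nsmul n t
  exact (key s t).antisymm (key t s)

theorem IsMaxOn.hasDerivAt_nonpos_of_Icc {g : ℝ → ℝ} {g' a c : ℝ} (hac : a < c)
    (h : IsMaxOn g (Icc a c) a) (hg : HasDerivAt g g' a) : g' ≤ 0 := by
  have hone : (1 : ℝ) ∈ posTangentConeAt (Icc a c) a :=
    one_mem_posTangentConeAt_iff_frequently.2
      ((Eventually.frequently (Ioc_mem_nhdsGT hac)).mono fun _ hu => Ioc_subset_Icc_self hu)
  simpa using h.localize.hasFDerivWithinAt_nonpos hg.hasDerivWithinAt.hasFDerivWithinAt hone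

variable {E : Type*} [NormedAddCommGroup E]

def penalized (v : E → ℝ) (X : ℝ → E) (κ L η t : ℝ) (p : E × ℝ) : ℝ :=
  v p.1 + (η * p.2 - κ * exp (2 * L * (t - p.2)) * ‖p.1 - X p.2‖ ^ 2)

theorem dist_lt_of_isMaxOn_penalized {v : E → ℝ} {K : Set E} {X : ℝ → E} {x : E}
    {κ L η M δ s t τ : ℝ}
    (hκ : 0 ≤ κ) (hL : 0 ≤ L) (hη : 0 ≤ η) (hδ : 0 ≤ δ) (hM : ∀ y ∈ K, v y ≤ M)
    (hsK : X s ∈ K) (hxK : x ∈ K) (hτ : τ ∈ Icc s t)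
    (hmax : IsMaxOn (penalized v X κ L η t) (K ×ˢ Icc s t) (x, τ))
    (hκδ : M + η * t - (v (X s) + η * s) < κ * δ ^ 2) : dist x (X τ) < δ := by
  by_contra! hδd
  have hlow := hmax (show (X s, s) ∈ K ×ˢ Icc s t from ⟨hsK, le_rfl, hτ.1.trans hτ.2⟩)
  have hexp : 1 ≤ exp (2 * L * (t - τ)) := one_le_exp (by have := hτ.2; positivity)
  have hpen : κ * δ ^ 2 ≤ κ * exp (2 * L * (t - τ)) * ‖x - X τ‖ ^ 2 := by
    rw [← dist_eq_norm]
    calc κ * δ ^ 2 = κ * 1 * δ ^ 2 := by ring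
      _ ≤ _ := by gcongr
  have hvx : v x ≤ M := hM x hxK
  have hητ : η * τ ≤ η * t := by have := hτ.2; gcongr
  simp only [penalized, mem_ofPred_eq, sub_self, norm_zero] at hlow
  linarith

variable [InnerProductSpace ℝ E]

section Gradient

variable [CompleteSpace E]

theorem inner_gradient_neg (φ : E → ℝ) (x y : E) :
    inner ℝ y (gradient (fun z => -φ z) x) = -inner ℝ y (gradient φ x) := by
  simp only [inner_gradient_right, fderiv_fun_neg, neg_apply, map_neg]

theorem inner_gradient_const_mul_norm_sub_sq (κ : ℝ) (c x y : E) :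
    inner ℝ y (gradient (fun z => κ * ‖z - c‖ ^ 2) x) = κ * (2 * inner ℝ (x - c) y) := by
  have h : HasFDerivAt (fun z => κ * ‖z - c‖ ^ 2) _ x :=
    ((hasFDerivAt_id x).sub_const c).norm_sq.const_mul κ
  rw [inner_gradient_right, h.fderiv]
  simp [inner_sub_left]

def IsViscositySubsolution (Ω : Set E) (b : E → E) (v : E → ℝ) : Prop :=
  ∀ φ : E → ℝ, ContDiff ℝ 1 φ → ∀ z ∈ Ω, IsLocalMaxOn (fun x => v x - φ x) Ω z →
    -(inner ℝ (b z) (gradient φ z) : ℝ) ≤ 0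

def IsViscositySupersolution (Ω : Set E) (b : E → E) (w : E → ℝ) : Prop :=
  ∀ φ : E → ℝ, ContDiff ℝ 1 φ → ∀ z ∈ Ω, IsLocalMinOn (fun x => w x - φ x) Ω z →
    0 ≤ -(inner ℝ (b z) (gradient φ z) : ℝ)

variable {Ω : Set E} {b : E → E} {v : E → ℝ}

theorem IsViscositySupersolution.neg {w : E → ℝ} (hw : IsViscositySupersolution Ω b w) :
    IsViscositySubsolution Ω b (-w) := by
  intro φ hφ z hz hmax
  have hmin : IsLocalMinOn (fun x => w x - (fun y => -φ y) x) Ω z := by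
    simpa [neg_sub_left, sub_eq_add_neg, add_comm] using hmax.neg
  simpa [inner_gradient_neg] using hw _ hφ.neg z hz hmin

theorem IsViscositySubsolution.inner_nonneg_of_isLocalMaxOn (hv : IsViscositySubsolution Ω b v)
    {κ : ℝ} {c x : E} (hx : x ∈ Ω)
    (hmax : IsLocalMaxOn (fun y => v y - κ * ‖y - c‖ ^ 2) Ω x) :
    0 ≤ κ * inner ℝ (x - c) (b x) := by
  have h := hv (fun y => κ * ‖y - c‖ ^ 2)
    (contDiff_const.mul ((contDiff_id.sub contDiff_const).norm_sq ℝ)) x hx hmax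
  rw [inner_gradient_const_mul_norm_sub_sq] at h
  linarith

/-- The weight `κ e^{2L(t-u)}` decays at rate `2L`, which absorbs the Lipschitz error
`⟪x - X τ, b x - b (X τ)⟫ ≤ L ‖x - X τ‖²`; so `η > 0` forbids a time maximum before `t`. -/
theorem IsViscositySubsolution.eq_of_isMaxOn_penalty (hv : IsViscositySubsolution Ω b v)
    {X : ℝ → E} {x : E} {L κ η τ t : ℝ} (hXτ : HasDerivAt X (b (X τ)) τ) (hx : x ∈ Ω)
    (hκ : 0 < κ) (hη : 0 < η) (hτt : τ ≤ t)
    (hLip : dist (b x) (b (X τ)) ≤ L * dist x (X τ))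
    (hmax_x : IsLocalMaxOn (fun y => v y - κ * exp (2 * L * (t - τ)) * ‖y - X τ‖ ^ 2) Ω x)
    (hmax_τ : IsMaxOn (fun u => η * u - κ * exp (2 * L * (t - u)) * ‖x - X u‖ ^ 2) (Icc τ t) τ) :
    τ = t := by
  by_contra hne
  set ψ := κ * exp (2 * L * (t - τ))
  set d := ‖x - X τ‖
  have hψ : 0 < ψ := by positivity
  have hspace : 0 ≤ ψ * inner ℝ (x - X τ) (b x) := hv.inner_nonneg_of_isLocalMaxOn hx hmax_x
  have hderiv : HasDerivAt (fun u => η * u - κ * exp (2 * L * (t - u)) * ‖x - X u‖ ^ 2)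
      (η + 2 * L * ψ * d ^ 2 + 2 * ψ * inner ℝ (x - X τ) (b (X τ))) τ := by
    have hexp : HasDerivAt (fun u => exp (2 * L * (t - u))) (exp (2 * L * (t - τ)) * -(2 * L)) τ :=
      by simpa using ((hasDerivAt_id τ).const_sub t |>.const_mul (2 * L)).exp
    have h := ((hasDerivAt_id' τ).const_mul η).sub
      ((hexp.const_mul κ).mul (hXτ.const_sub x).norm_sq)
    refine h.congr_deriv ?_
    simp only [ψ, d, inner_neg_right]
    ring
  have htime := hmax_τ.hasDerivAt_nonpos_of_Icc (lt_of_le_of_ne hτt hne) hderiv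
  have hLip' : inner ℝ (x - X τ) (b x - b (X τ)) ≤ L * d ^ 2 :=
    calc _ ≤ d * ‖b x - b (X τ)‖ := real_inner_le_norm _ _
      _ ≤ d * (L * d) := by gcongr; simpa [dist_eq_norm] using hLip
      _ = L * d ^ 2 := by ring
  rw [inner_sub_right] at hLip'
  nlinarith [mul_le_mul_of_nonneg_left hLip' hψ.le]

theorem IsViscositySubsolution.snd_eq_of_isMaxOn_penalized (hv : IsViscositySubsolution Ω b v)
    {K : Set E} {X : ℝ → E} {x : E} {L : NNReal} {κ η s t τ : ℝ} (hKΩ : K ⊆ Ω)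
    (hL : LipschitzOnWith L b K) (hX : HasDerivAt X (b (X τ)) τ) (hκ : 0 < κ) (hη : 0 < η)
    (hK : K ∈ 𝓝 x) (hXK : X τ ∈ K) (hτ : τ ∈ Icc s t)
    (hmax : IsMaxOn (penalized v X κ L η t) (K ×ˢ Icc s t) (x, τ)) : τ = t := by
  have hxK : x ∈ K := mem_of_mem_nhds hK
  refine hv.eq_of_isMaxOn_penalty hX (hKΩ hxK) hκ hη hτ.2 (hL.dist_le_mul x hxK (X τ) hXK) ?_ ?_
  · filter_upwards [mem_nhdsWithin_of_mem_nhds hK] with y hy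
    have := hmax (show (y, τ) ∈ K ×ˢ Icc s t from ⟨hy, hτ⟩)
    simp only [penalized, mem_ofPred_eq] at this ⊢
    linarith
  · intro u hu
    have := hmax (show (x, u) ∈ K ×ˢ Icc s t from ⟨hxK, hτ.1.trans hu.1, hu.2⟩)
    simp only [penalized, mem_ofPred_eq] at this ⊢
    linarith

end Gradient

section Proper

variable [ProperSpace E] {Ω : Set E} {b : E → E} {v : E → ℝ}

theorem IsViscositySubsolution.apply_lt_apply_add_of_le (hΩ : IsOpen Ω)
    (hb : LocallyLipschitzOn Ω b) (hvu : UpperSemicontinuousOn v Ω)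
    (hv : IsViscositySubsolution Ω b v) {X : ℝ → E} (hXΩ : ∀ t, X t ∈ Ω)
    (hX : ∀ t, HasDerivAt X (b (X t)) t) {s t γ η : ℝ} (hst : s ≤ t) (hγ : 0 < γ) (hη : 0 < η) :
    v (X s) < v (X t) + γ + η * (t - s) := by
  have hXc : Continuous X := continuous_iff_continuousAt.2 fun u => (hX u).continuousAt
  have hO : IsCompact (X '' Icc s t) := isCompact_Icc.image hXc
  obtain ⟨r, hr, hKΩ⟩ :=
    hO.exists_cthickening_subset_open hΩ (image_subset_iff.2 fun u _ => hXΩ u)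
  set K := cthickening r (X '' Icc s t)
  have hK : IsCompact K := hO.cthickening
  have hXK : ∀ u ∈ Icc s t, X u ∈ K := fun u hu =>
    self_subset_cthickening _ (mem_image_of_mem X hu)
  obtain ⟨L, hL⟩ := (hb.mono hKΩ).exists_lipschitzOnWith_of_compact hK
  obtain ⟨M, hM⟩ := (hvu.mono hKΩ).bddAbove_of_isCompact hK
  obtain ⟨ρ, hρ, hρv⟩ := mem_nhdsWithin_iff.1 (hvu (X t) (hXΩ t) _ (lt_add_of_pos_right _ hγ))
  set δ := min (r / 2) ρ
  have hδ : 0 < δ := lt_min (half_pos hr) hρ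
  set C := M + η * t - (v (X s) + η * s)
  obtain ⟨κ, hκ, hκC⟩ : ∃ κ > 0, C < κ * δ ^ 2 :=
    ⟨(|C| + 1) / δ ^ 2, by positivity, by
      rw [div_mul_cancel₀ _ (by positivity)]; linarith [le_abs_self C]⟩
  have hF : UpperSemicontinuousOn (penalized v X κ L η t) (K ×ˢ Icc s t) :=
    ((hvu.mono hKΩ).comp continuousOn_fst fun p hp => hp.1).add
      (Continuous.continuousOn (by fun_prop)).upperSemicontinuousOn
  have hsD : (X s, s) ∈ K ×ˢ Icc s t := ⟨hXK s (left_mem_Icc.2 hst), left_mem_Icc.2 hst⟩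
  obtain ⟨⟨x, τ⟩, ⟨hxK, hτ⟩, hmax⟩ := hF.exists_isMaxOn ⟨_, hsD⟩ (hK.prod isCompact_Icc)
  have hd : dist x (X τ) < δ := dist_lt_of_isMaxOn_penalized hκ.le L.2 hη.le hδ.le
    (fun y hy => hM (mem_image_of_mem v hy)) hsD.1 hxK hτ hmax hκC
  have hnhds : K ∈ 𝓝 x := mem_of_superset (ball_mem_nhds x (half_pos hr)) fun y hy =>
    mem_cthickening_of_dist_le y (X τ) r _ (mem_image_of_mem X hτ) (by
      linarith [dist_triangle y x (X τ), mem_ball.1 hy, hd.trans_le (min_le_left _ _)])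
  obtain rfl : τ = t :=
    hv.snd_eq_of_isMaxOn_penalized hKΩ hL (hX τ) hκ hη hnhds (hXK τ hτ) hτ hmax
  have hvx : v x < v (X τ) + γ := hρv ⟨mem_ball.2 (hd.trans_le (min_le_right _ _)), hKΩ hxK⟩
  have hlow := hmax hsD
  have hpen : 0 ≤ κ * exp (2 * L * (τ - τ)) * ‖x - X τ‖ ^ 2 := by positivity
  simp only [penalized, mem_ofPred_eq, sub_self, norm_zero] at hlow hpen
  linarith

theorem IsViscositySubsolution.monotone_comp (hΩ : IsOpen Ω) (hb : LocallyLipschitzOn Ω b)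
    (hvu : UpperSemicontinuousOn v Ω) (hv : IsViscositySubsolution Ω b v) {X : ℝ → E}
    (hXΩ : ∀ t, X t ∈ Ω) (hX : ∀ t, HasDerivAt X (b (X t)) t) : Monotone (v ∘ X) := by
  intro s t hst
  refine le_of_forall_pos_lt_add fun ε hε => ?_
  have hts : 0 ≤ t - s := sub_nonneg.2 hst
  have hη : 0 < ε / 2 / (t - s + 1) := by positivity
  have h := hv.apply_lt_apply_add_of_le hΩ hb hvu hXΩ hX hst (half_pos hε) hη
  have : ε / 2 / (t - s + 1) * (t - s) ≤ ε / 2 := by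
    rw [div_mul_eq_mul_div, div_le_iff₀ (by linarith)]
    nlinarith
  simp only [Function.comp_apply]
  linarith

end Proper

/-- An upper semicontinuous viscosity subsolution of `−b·Dv = 0`
(and likewise a lower semicontinuous viscosity supersolution) is constant along every
periodic orbit of the locally Lipschitz vector field `b`. -/
theorem constant_on_periodic_orbits
    (Ω : Set E2) (hΩ : IsOpen Ω)
    (b : E2 → E2)
    (hb : ∀ x ∈ Ω, ∃ K : NNReal, ∃ s ∈ nhdsWithin x Ω, LipschitzOnWith K b s)
    (v w : E2 → ℝ)
    (hv : UpperSemicontinuousOn v Ω)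
    (hvsub : ∀ φ : E2 → ℝ, ContDiff ℝ 1 φ → ∀ z ∈ Ω,
      IsLocalMaxOn (fun x => v x - φ x) Ω z →
      -(inner ℝ (b z) (gradient φ z) : ℝ) ≤ 0)
    (hw : LowerSemicontinuousOn w Ω)
    (hwsup : ∀ φ : E2 → ℝ, ContDiff ℝ 1 φ → ∀ z ∈ Ω,
      IsLocalMinOn (fun x => w x - φ x) Ω z →
      0 ≤ -(inner ℝ (b z) (gradient φ z) : ℝ))
    (X : ℝ → E2) (hXΩ : ∀ t : ℝ, X t ∈ Ω)
    (hX : ∀ t : ℝ, HasDerivAt X (b (X t)) t)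
    (T : ℝ) (hT : 0 < T) (hper : Function.Periodic X T) :
    (∀ s t : ℝ, v (X s) = v (X t)) ∧ (∀ s t : ℝ, w (X s) = w (X t)) := by
  have hv_mono : Monotone (v ∘ X) :=
    IsViscositySubsolution.monotone_comp hΩ hb hv hvsub hXΩ hX
  have hw_mono : Monotone ((-w) ∘ X) :=
    (IsViscositySupersolution.neg hwsup).monotone_comp hΩ hb hw.neg hXΩ hX
  refine ⟨(hper.comp v).eq_of_monotone hT hv_mono, fun s t => ?_⟩
  simpa using (hper.comp (-w)).eq_of_monotone hT hw_mono s t
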